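/- Suppose the data is separable with margin μ > 0 and satisfies the non-degeneracy assumption: for every j ∈ [n] and every tuple (k₁,…,k_n) of nonnegative integers, Σ_{i=1}^n (1/2 + k_i)⟨y_i a_i, y_j a_j⟩ ≠ 0. For each γ > 0, let (θ_t^{(γ)}) be the LR+GD iterates θ₀^{(γ)} = 0, θ_{t+1}^{(γ)} = θ_t^{(γ)} − γ ∇f(θ_t^{(γ)}), and let (θ̂_t) be the Batch Perceptron iterates from θ̂₀ = 0. Then for every t ≥ 0, θ_t^{(γ)}/γ → θ̂_t as γ → ∞. -/

import Mathlib

/-!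
Dividing the gradient step by `γ` gives
`θ_{t+1}/γ = θ_t/γ + (1/n) Σ_i σ_i y_i a_i` with weights `σ_i = (1 + exp(γ · y_i⟨a_i, θ_t/γ⟩))⁻¹`.
At `t = 0` every weight is `1/2`, which is the first Perceptron step. For `t ≥ 1` the Perceptron
iterate has the form `θ̂_t = (1/n) Σ_i (1/2 + k_i) y_i a_i` with `k_i ∈ ℕ`, so by non-degeneracy
no `y_i⟨a_i, θ̂_t⟩` vanishes. Hence, if `θ_t/γ → θ̂_t`, each weight tends to `1` or `0` according
as sample `i` is misclassified by `θ̂_t` or not, and the rescaled step tends to the Perceptron step.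
-/

open scoped RealInnerProductSpace BigOperators

/-- The gradient of the logistic loss `f(θ) = (1/n) Σ_i log(1 + exp(-y_i aᵢᵀθ))`. -/
noncomputable def logisticGrad {d n : ℕ} (a : Fin n → EuclideanSpace ℝ (Fin d))
    (y : Fin n → ℝ) (θ : EuclideanSpace ℝ (Fin d)) : EuclideanSpace ℝ (Fin d) :=
  -(((1 : ℝ) / n) • ∑ i, ((1 + Real.exp (y i * ⟪a i, θ⟫))⁻¹ * y i) • a i)

open Filter Finset Topology

lemma tendsto_inv_one_add_exp_mul {g : ℝ → ℝ} {c : ℝ} (hc : c ≠ 0)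
    (hg : Tendsto g atTop (𝓝 c)) :
    Tendsto (fun γ : ℝ => (1 + Real.exp (γ * g γ))⁻¹) atTop (𝓝 (if c ≤ 0 then 1 else 0)) := by
  rcases hc.lt_or_gt with hneg | hpos
  · rw [if_pos hneg.le]
    have hexp : Tendsto (fun γ : ℝ => Real.exp (γ * g γ)) atTop (𝓝 0) :=
      Real.tendsto_exp_atBot.comp (tendsto_id.atTop_mul_neg hneg hg)
    simpa using (tendsto_const_nhds.add hexp).inv₀ (by norm_num : (1 : ℝ) + 0 ≠ 0)
  · rw [if_neg hpos.not_ge]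
    have hexp : Tendsto (fun γ : ℝ => Real.exp (γ * g γ)) atTop atTop :=
      Real.tendsto_exp_atTop.comp (tendsto_id.atTop_mul_pos hpos hg)
    exact (tendsto_atTop_add_const_left atTop 1 hexp).inv_tendsto_atTop

section PerceptronCombination

variable {E : Type*} [NormedAddCommGroup E] [InnerProductSpace ℝ E] {n : ℕ}
  (a : Fin n → E) (y : Fin n → ℝ)

/-- `(1/n) Σ_i (1/2 + k_i) y_i a_i`; for `t ≥ 1` the Batch Perceptron iterate `θ̂_t` is of this
form, `k_i` counting the rounds `1, …, t - 1` in which sample `i` was misclassified. -/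
noncomputable def perceptronCombination (k : Fin n → ℕ) : E :=
  ((1 : ℝ) / n) • ∑ i, ((1 / 2 : ℝ) + k i) • (y i • a i)

lemma perceptronCombination_zero :
    perceptronCombination a y 0 = ((1 : ℝ) / (2 * n)) • ∑ i, y i • a i := by
  simp only [perceptronCombination, Pi.zero_apply, Nat.cast_zero, add_zero, smul_sum, smul_smul]
  congr 1 with i
  ring_nf

lemma perceptronCombination_add_sum_smul (k : Fin n → ℕ) (S : Finset (Fin n)) :
    perceptronCombination a y k + ((1 : ℝ) / n) • ∑ i ∈ S, y i • a i =
      perceptronCombination a y (fun i => k i + if i ∈ S then 1 else 0) := by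
  have hS : ∑ i ∈ S, y i • a i = ∑ i, (if i ∈ S then (1 : ℝ) else 0) • (y i • a i) := by
    simp only [ite_smul, one_smul, zero_smul, sum_ite_mem, univ_inter]
  rw [perceptronCombination, perceptronCombination, hS, ← smul_add, ← sum_add_distrib]
  congr 2 with i
  split_ifs <;> push_cast <;> module

lemma mul_inner_perceptronCombination (k : Fin n → ℕ) (j : Fin n) :
    y j * ⟪a j, perceptronCombination a y k⟫ =
      (1 / n) * ∑ i, ((1 / 2 : ℝ) + k i) * ⟪y i • a i, y j • a j⟫ := by
  simp only [perceptronCombination, real_inner_smul_right, inner_sum, real_inner_smul_left,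
    mul_sum]
  refine sum_congr rfl fun i _ => ?_
  rw [real_inner_comm (a j) (a i)]
  ring

lemma exists_eq_perceptronCombination {θhat : ℕ → E} (h0 : θhat 0 = 0)
    (h1 : θhat 1 = θhat 0 + ((1 : ℝ) / (2 * n)) • ∑ i, y i • a i)
    (hstep : ∀ t, 1 ≤ t →
      θhat (t + 1) = θhat t + ((1 : ℝ) / n) •
        ∑ i ∈ Finset.univ.filter (fun i => y i * ⟪a i, θhat t⟫ ≤ 0), y i • a i) :
    ∀ t, 1 ≤ t → ∃ k, θhat t = perceptronCombination a y k := by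
  intro t ht
  induction t, ht using Nat.le_induction with
  | base => exact ⟨0, by rw [h1, h0, zero_add, perceptronCombination_zero]⟩
  | succ t ht ih =>
    obtain ⟨k, hk⟩ := ih
    exact ⟨_, by rw [hstep t ht, hk, perceptronCombination_add_sum_smul]⟩

end PerceptronCombination

section GradientDescent

variable {d n : ℕ} (a : Fin n → EuclideanSpace ℝ (Fin d)) (y : Fin n → ℝ)

lemma logisticGrad_zero : logisticGrad a y 0 = -(((1 : ℝ) / (2 * n)) • ∑ i, y i • a i) := by
  simp only [logisticGrad, inner_zero_right, mul_zero, Real.exp_zero, smul_sum, smul_smul]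
  congr 2 with i
  ring_nf

lemma inv_smul_sub_smul_logisticGrad {γ : ℝ} (hγ : γ ≠ 0) (θ : EuclideanSpace ℝ (Fin d)) :
    γ⁻¹ • (θ - γ • logisticGrad a y θ) =
      γ⁻¹ • θ + ((1 : ℝ) / n) • ∑ i, ((1 + Real.exp (y i * ⟪a i, θ⟫))⁻¹ * y i) • a i := by
  rw [smul_sub, smul_smul, inv_mul_cancel₀ hγ, one_smul, logisticGrad, sub_neg_eq_add]

lemma tendsto_inv_smul_sub_smul_logisticGrad {θ : ℝ → EuclideanSpace ℝ (Fin d)}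
    {v : EuclideanSpace ℝ (Fin d)} (hθ : Tendsto (fun γ : ℝ => γ⁻¹ • θ γ) atTop (𝓝 v))
    (hv : ∀ i, y i * ⟪a i, v⟫ ≠ 0) :
    Tendsto (fun γ : ℝ => γ⁻¹ • (θ γ - γ • logisticGrad a y (θ γ))) atTop
      (𝓝 (v + ((1 : ℝ) / n) • ∑ i ∈ univ.filter (fun i => y i * ⟪a i, v⟫ ≤ 0), y i • a i)) := by
  have hweight : ∀ i, Tendsto (fun γ : ℝ => (1 + Real.exp (y i * ⟪a i, θ γ⟫))⁻¹) atTop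
      (𝓝 (if y i * ⟪a i, v⟫ ≤ 0 then 1 else 0)) := by
    intro i
    refine (tendsto_inv_one_add_exp_mul (hv i)
      ((tendsto_const_nhds.inner hθ).const_mul (y i))).congr' ?_
    filter_upwards [eventually_ne_atTop 0] with γ hγ
    rw [real_inner_smul_right]
    field_simp
  have hsum : ∑ i ∈ univ.filter (fun i => y i * ⟪a i, v⟫ ≤ 0), y i • a i =
      ∑ i, ((if y i * ⟪a i, v⟫ ≤ 0 then (1 : ℝ) else 0) * y i) • a i := by
    rw [sum_filter]
    congr 1 with i
    split_ifs <;> simp only [one_mul, zero_mul, zero_smul]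
  rw [hsum]
  refine (hθ.add ((tendsto_finsetSum _ fun i _ =>
    ((hweight i).mul_const (y i)).smul_const (a i)).const_smul _)).congr' ?_
  filter_upwards [eventually_ne_atTop 0] with γ hγ
  exact (inv_smul_sub_smul_logisticGrad a y hγ (θ γ)).symm

end GradientDescent

theorem lr_gd_reduces_to_batch_perceptron {d n : ℕ}
    (a : Fin n → EuclideanSpace ℝ (Fin d)) (y : Fin n → ℝ)
    (hnondeg : ∀ j : Fin n, ∀ k : Fin n → ℕ,
      ∑ i, ((1 / 2 : ℝ) + k i) * ⟪y i • a i, y j • a j⟫ ≠ 0)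
    (θ : ℝ → ℕ → EuclideanSpace ℝ (Fin d))
    (hgd0 : ∀ γ : ℝ, θ γ 0 = 0)
    (hgdstep : ∀ γ : ℝ, ∀ t : ℕ, θ γ (t + 1) = θ γ t - γ • logisticGrad a y (θ γ t))
    (θhat : ℕ → EuclideanSpace ℝ (Fin d))
    (h0 : θhat 0 = 0)
    (h1 : θhat 1 = θhat 0 + ((1 : ℝ) / (2 * n)) • ∑ i, y i • a i)
    (hstep : ∀ t, 1 ≤ t →
      θhat (t + 1) = θhat t + ((1 : ℝ) / n) •
        ∑ i ∈ Finset.univ.filter (fun i => y i * ⟪a i, θhat t⟫ ≤ 0), y i • a i) :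
    ∀ t : ℕ, Filter.Tendsto (fun γ : ℝ => γ⁻¹ • θ γ t) Filter.atTop (nhds (θhat t)) := by
  intro t
  induction t with
  | zero => simp only [hgd0, smul_zero, h0, tendsto_const_nhds]
  | succ t ih =>
    simp only [hgdstep]
    rcases Nat.eq_zero_or_pos t with rfl | ht
    · refine tendsto_const_nhds.congr' ?_
      filter_upwards [eventually_ne_atTop 0] with γ hγ
      rw [h1, h0, hgd0, logisticGrad_zero, zero_sub, zero_add]
      simp only [smul_neg, neg_neg, inv_smul_smul₀ hγ]
    · obtain ⟨k, hk⟩ := exists_eq_perceptronCombination a y h0 h1 hstep t ht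
      rw [hstep t ht]
      refine tendsto_inv_smul_sub_smul_logisticGrad a y ih fun j => ?_
      rw [hk, mul_inner_perceptronCombination]
      exact mul_ne_zero (one_div_ne_zero (Nat.cast_ne_zero.mpr j.pos.ne')) (hnondeg j k)
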